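/- For every quandle Q and set A of representatives of its orbits, there exists a surjective quandle homomorphism Q → Q(G_Q, θ(A)). -/
import Mathlib


open Quandles

namespace GA

variable {G : Type*} [Group G]

/-- The equivalence relation on `A × G`: `(a, gh) ~ (a, h)` for `g ∈ C_G(a)`,
i.e. `(a,u) ~ (b,v)` iff `a = b` and `u * v⁻¹` centralizes `a`. -/
def rel (A : Set G) (p q : A × G) : Prop :=
  p.1 = q.1 ∧ p.2 * q.2⁻¹ ∈ Subgroup.centralizer ({(p.1 : G)} : Set G)

theorem rel_equiv (A : Set G) : Equivalence (rel A) := by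
  constructor
  · intro p
    exact ⟨rfl, by simpa using (Subgroup.centralizer ({(p.1 : G)} : Set G)).one_mem⟩
  · rintro p q ⟨h1, h2⟩
    refine ⟨h1.symm, ?_⟩
    have := (Subgroup.centralizer ({(p.1 : G)} : Set G)).inv_mem h2
    simpa [h1] using this
  · rintro p q r ⟨h1, h2⟩ ⟨h1', h2'⟩
    refine ⟨h1.trans h1', ?_⟩
    have := (Subgroup.centralizer ({(p.1 : G)} : Set G)).mul_mem h2 (by rw [h1]; exact h2')
    simpa [mul_assoc] using this

instance setoid (A : Set G) : Setoid (A × G) := ⟨rel A, rel_equiv A⟩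

/-- The `(G,A)`-quandle as a set: the quotient of `A × G` by `(a,gh) ~ (a,h)`, `g ∈ C_G(a)`. -/
def Q (G : Type*) [Group G] (A : Set G) : Type _ := Quotient (setoid A)

/-- The class of `(a,u)` in `Q(G,A)`. -/
def mk {A : Set G} (a : A) (u : G) : Q G A := Quotient.mk (setoid A) (a, u)

/-- representative-level operation `(a,u) * (b,v) = (a, u v⁻¹ b v)`,
written as a left action of `(b,v)` on `(a,u)`. -/
def pop {A : Set G} (x y : A × G) : A × G := (y.1, y.2 * x.2⁻¹ * (x.1 : G) * x.2)

/-- representative-level inverse operation `(a,u) *⁻¹ (b,v) = (a, u v⁻¹ b⁻¹ v)`. -/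
def pinv {A : Set G} (x y : A × G) : A × G := (y.1, y.2 * x.2⁻¹ * (x.1 : G)⁻¹ * x.2)

theorem centralizer_mem_iff {a u : G} : u ∈ Subgroup.centralizer ({a} : Set G) ↔ u * a = a * u := by
  rw [Subgroup.mem_centralizer_singleton_iff]

theorem conj_indep {b v d : G} (h : d * b = b * d) : ((d * v))⁻¹ * b * (d * v) = v⁻¹ * b * v := by
  have h' : d⁻¹ * b * d = b := by
    rw [mul_assoc, ← h]; group
  calc (d * v)⁻¹ * b * (d * v) = v⁻¹ * (d⁻¹ * b * d) * v := by group
    _ = v⁻¹ * b * v := by rw [h']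

theorem pop_well {A : Set G} : ∀ (x₁ y₁ x₂ y₂ : A × G), rel A x₁ x₂ → rel A y₁ y₂ →
    rel A (pop x₁ y₁) (pop x₂ y₂) := by
  rintro ⟨b₁, v₁⟩ ⟨a₁, u₁⟩ ⟨b₂, v₂⟩ ⟨a₂, u₂⟩ ⟨hb, hv⟩ ⟨ha, hu⟩
  refine ⟨ha, ?_⟩
  simp only [pop]
  rw [centralizer_mem_iff] at hv hu ⊢
  have hb' : (b₁ : G) = (b₂ : G) := congrArg _ hb
  have key : v₁⁻¹ * (b₁ : G) * v₁ = v₂⁻¹ * (b₂ : G) * v₂ := by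
    conv_lhs => rw [show v₁ = (v₁ * v₂⁻¹) * v₂ by group, hb']
    exact conj_indep (by rw [← hb']; exact hv)
  have heq : u₁ * v₁⁻¹ * (b₁:G) * v₁ * (u₂ * v₂⁻¹ * (b₂:G) * v₂)⁻¹ = u₁ * u₂⁻¹ := by
    calc u₁ * v₁⁻¹ * (b₁:G) * v₁ * (u₂ * v₂⁻¹ * (b₂:G) * v₂)⁻¹
        = u₁ * (v₁⁻¹ * (b₁:G) * v₁) * (v₂⁻¹ * (b₂:G) * v₂)⁻¹ * u₂⁻¹ := by group
      _ = u₁ * (v₂⁻¹ * (b₂:G) * v₂) * (v₂⁻¹ * (b₂:G) * v₂)⁻¹ * u₂⁻¹ := by rw [key]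
      _ = u₁ * u₂⁻¹ := by group
  rw [heq]
  exact hu

theorem pinv_well {A : Set G} : ∀ (x₁ y₁ x₂ y₂ : A × G), rel A x₁ x₂ → rel A y₁ y₂ →
    rel A (pinv x₁ y₁) (pinv x₂ y₂) := by
  rintro ⟨b₁, v₁⟩ ⟨a₁, u₁⟩ ⟨b₂, v₂⟩ ⟨a₂, u₂⟩ ⟨hb, hv⟩ ⟨ha, hu⟩
  refine ⟨ha, ?_⟩
  simp only [pinv]
  rw [centralizer_mem_iff] at hv hu ⊢
  have hb' : (b₁ : G) = (b₂ : G) := congrArg _ hb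
  have hvc : (v₁ * v₂⁻¹) * (b₂ : G)⁻¹ = (b₂ : G)⁻¹ * (v₁ * v₂⁻¹) := by
    have : Commute (v₁ * v₂⁻¹) (b₂ : G) := by rw [← hb']; exact hv
    exact this.inv_right
  have key : v₁⁻¹ * (b₁ : G)⁻¹ * v₁ = v₂⁻¹ * (b₂ : G)⁻¹ * v₂ := by
    conv_lhs => rw [show v₁ = (v₁ * v₂⁻¹) * v₂ by group, hb']
    exact conj_indep hvc
  have heq : u₁ * v₁⁻¹ * (b₁:G)⁻¹ * v₁ * (u₂ * v₂⁻¹ * (b₂:G)⁻¹ * v₂)⁻¹ = u₁ * u₂⁻¹ := by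
    calc u₁ * v₁⁻¹ * (b₁:G)⁻¹ * v₁ * (u₂ * v₂⁻¹ * (b₂:G)⁻¹ * v₂)⁻¹
        = u₁ * (v₁⁻¹ * (b₁:G)⁻¹ * v₁) * (v₂⁻¹ * (b₂:G)⁻¹ * v₂)⁻¹ * u₂⁻¹ := by group
      _ = u₁ * (v₂⁻¹ * (b₂:G)⁻¹ * v₂) * (v₂⁻¹ * (b₂:G)⁻¹ * v₂)⁻¹ * u₂⁻¹ := by rw [key]
      _ = u₁ * u₂⁻¹ := by group
  rw [heq]
  exact hu

instance quandle (G : Type*) [Group G] (A : Set G) : Quandle (Q G A) where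
  act := Quotient.map₂ pinv (fun _ _ h _ _ h' => pinv_well _ _ _ _ h h')
  invAct := Quotient.map₂ pop (fun _ _ h _ _ h' => pop_well _ _ _ _ h h')
  self_distrib := by
    rintro ⟨⟨b,v⟩⟩ ⟨⟨c,w⟩⟩ ⟨⟨a,u⟩⟩
    refine Quotient.sound ⟨rfl, ?_⟩
    simp only [pinv]
    rw [centralizer_mem_iff]
    group
  left_inv := by
    rintro ⟨⟨b,v⟩⟩ ⟨⟨a,u⟩⟩
    refine Quotient.sound ⟨rfl, ?_⟩
    simp only [pop, pinv]
    rw [centralizer_mem_iff]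
    group
  right_inv := by
    rintro ⟨⟨b,v⟩⟩ ⟨⟨a,u⟩⟩
    refine Quotient.sound ⟨rfl, ?_⟩
    simp only [pop, pinv]
    rw [centralizer_mem_iff]
    group
  fix := by
    rintro ⟨⟨a,u⟩⟩
    refine Quotient.sound ⟨rfl, ?_⟩
    simp only [pinv]
    rw [centralizer_mem_iff]
    have : (u * u⁻¹ * (a:G)⁻¹ * u) * u⁻¹ = (a : G)⁻¹ := by group
    rw [this]
    group

@[simp] theorem invAct_mk {A : Set G} (a b : A) (u v : G) :
    Rack.invAct (mk b v) (mk a u) = mk a (u * v⁻¹ * (b : G) * v) := rfl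

@[simp] theorem act_mk {A : Set G} (a b : A) (u v : G) :
    Shelf.act (mk b v) (mk a u) = mk a (u * v⁻¹ * (b : G)⁻¹ * v) := rfl

end GA

/-- Two elements of a rack lie in the same orbit under the inner automorphism group iff they
are related by the equivalence relation generated by `a ~ x ◃ a` and `a ~ x ◃⁻¹ a`. -/
def sameOrbit (Q : Type*) [Rack Q] : Q → Q → Prop :=
  Relation.EqvGen (fun a b => ∃ x : Q, b = x ◃ a ∨ b = x ◃⁻¹ a)

namespace QGAProof

open Rack

variable {R : Type*} [Quandle R]

/-- The natural map to the enveloping group. -/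
def θ (x : R) : EnvelGroup R := Rack.toEnvelGroup R x

theorem theta_act (x y : R) : θ (x ◃ y) = θ x * θ y * (θ x)⁻¹ := by
  have h := (Rack.toEnvelGroup R).map_act (x := x) (y := y)
  rw [Quandle.conj_act_eq_conj] at h
  exact h

theorem theta_invAct (x y : R) : θ (x ◃⁻¹ y) = (θ x)⁻¹ * θ y * θ x := by
  have h := theta_act x (x ◃⁻¹ y)
  rw [Rack.act_invAct_eq] at h
  rw [h]; group

theorem conj_of_sameOrbit {a q : R} (h : sameOrbit R a q) :
    ∃ u : EnvelGroup R, θ q = u⁻¹ * θ a * u := by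
  induction h with
  | rel x y hxy =>
    obtain ⟨z, hz | hz⟩ := hxy
    · exact ⟨(θ z)⁻¹, by rw [hz, theta_act]; group⟩
    · exact ⟨θ z, by rw [hz, theta_invAct]⟩
  | refl x => exact ⟨1, by group⟩
  | symm x y _ ih =>
    obtain ⟨u, hu⟩ := ih
    exact ⟨u⁻¹, by rw [hu]; group⟩
  | trans x y z _ _ ih1 ih2 =>
    obtain ⟨u, hu⟩ := ih1
    obtain ⟨v, hv⟩ := ih2
    exact ⟨u * v, by rw [hv, hu]; group⟩

/-- The set of elements `v` of the enveloping group such that conjugation by `v` (in either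
direction) of any `θ a` is realized by an element of the quandle in the same orbit as `a`. -/
def goodSet (R : Type*) [Quandle R] : Subgroup (EnvelGroup R) where
  carrier := {v | ∀ a : R, (∃ q, sameOrbit R a q ∧ θ q = v⁻¹ * θ a * v) ∧
                            (∃ q, sameOrbit R a q ∧ θ q = v * θ a * v⁻¹)}
  one_mem' := fun a =>
    ⟨⟨a, Relation.EqvGen.refl a, by group⟩, ⟨a, Relation.EqvGen.refl a, by group⟩⟩
  inv_mem' := by
    rintro v hv a
    constructor
    · obtain ⟨q, hq1, hq2⟩ := (hv a).2
      exact ⟨q, hq1, by rw [hq2]; group⟩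
    · obtain ⟨q, hq1, hq2⟩ := (hv a).1
      exact ⟨q, hq1, by rw [hq2]; group⟩
  mul_mem' := by
    rintro v w hv hw a
    constructor
    · obtain ⟨q1, hq1, hq2⟩ := (hv a).1
      obtain ⟨q2, hr1, hr2⟩ := (hw q1).1
      exact ⟨q2, hq1.trans _ _ _ hr1, by rw [hr2, hq2]; group⟩
    · obtain ⟨q1, hq1, hq2⟩ := (hw a).2
      obtain ⟨q2, hr1, hr2⟩ := (hv q1).2
      exact ⟨q2, hq1.trans _ _ _ hr1, by rw [hr2, hq2]; group⟩

theorem theta_mem_goodSet (x : R) : θ x ∈ goodSet R := by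
  intro a
  constructor
  · exact ⟨x ◃⁻¹ a, Relation.EqvGen.rel a _ ⟨x, Or.inr rfl⟩, theta_invAct x a⟩
  · exact ⟨x ◃ a, Relation.EqvGen.rel a _ ⟨x, Or.inl rfl⟩, theta_act x a⟩

theorem mem_goodSet (v : EnvelGroup R) : v ∈ goodSet R := by
  induction v using Quotient.inductionOn with
  | h p =>
    induction p with
    | unit => exact (goodSet R).one_mem
    | incl x => exact theta_mem_goodSet x
    | mul a b iha ihb =>
      have h : (⟦a.mul b⟧ : EnvelGroup R) = Mul.mul (α := EnvelGroup R) ⟦a⟧ ⟦b⟧ := rfl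
      rw [h]
      exact (goodSet R).mul_mem iha ihb
    | inv a iha =>
      have h : (⟦a.inv⟧ : EnvelGroup R) = Inv.inv (α := EnvelGroup R) ⟦a⟧ := rfl
      rw [h]
      exact (goodSet R).inv_mem iha

theorem mk_eq_of_conj {G : Type*} [Group G] {A : Set G} (a : A) {v w : G}
    (h : v⁻¹ * (a : G) * v = w⁻¹ * (a : G) * w) : GA.mk a v = GA.mk a w := by
  apply Quotient.sound
  refine ⟨rfl, ?_⟩
  rw [GA.centralizer_mem_iff]
  calc v * w⁻¹ * (a : G) = v * (w⁻¹ * (a : G) * w) * w⁻¹ := by group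
    _ = v * (v⁻¹ * (a : G) * v) * w⁻¹ := by rw [h]
    _ = (a : G) * (v * w⁻¹) := by group

end QGAProof

/-- For every quandle `Q` and set `A` of representatives of its orbits under the inner
automorphism group, there is a surjective quandle homomorphism `Q → Q(G_Q, θ(A))`,
where `θ : Q → G_Q` is the natural map to the enveloping group. -/
theorem quandle_surjects_onto_GA (Q : Type*) [Quandle Q]
    (A : Set Q) (hA : ∀ q : Q, ∃! a : Q, a ∈ A ∧ sameOrbit Q a q) :
    ∃ f : Q → GA.Q (Rack.EnvelGroup Q)
        ((fun x : Q => (Rack.toEnvelGroup Q x : Rack.EnvelGroup Q)) '' A),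
      Function.Surjective f ∧
      (∀ x y : Q, f (x ◃ y) = f x ◃ f y) ∧
      (∀ x y : Q, f (x ◃⁻¹ y) = f x ◃⁻¹ f y) := by
  classical
  open QGAProof in
  have hA2 := fun q : Q => hA q
  simp only [ExistsUnique] at hA2
  choose rep h1 huniq using hA2
  have hmem := fun q : Q => (h1 q).1
  have horb := fun q : Q => (h1 q).2
  choose u hu using fun q : Q => QGAProof.conj_of_sameOrbit (horb q)
  set A' : Set (Rack.EnvelGroup Q) :=
    (fun x : Q => (Rack.toEnvelGroup Q x : Rack.EnvelGroup Q)) '' A with hA'def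
  have memA' : ∀ q : Q, QGAProof.θ (rep q) ∈ A' := fun q => ⟨rep q, hmem q, rfl⟩
  refine ⟨fun q => GA.mk (⟨QGAProof.θ (rep q), memA' q⟩ : A') (u q), ?_, ?_, ?_⟩
  · -- surjectivity
    rintro ⟨⟨b, v⟩⟩
    obtain ⟨a, haA, hab⟩ := b.2
    obtain ⟨q, hq1, hq2⟩ := (QGAProof.mem_goodSet (R := Q) v a).1
    refine ⟨q, ?_⟩
    have hrep : a = rep q := huniq q a ⟨haA, hq1⟩
    have hb' : (⟨QGAProof.θ (rep q), memA' q⟩ : A') = b := Subtype.ext (by show QGAProof.θ (rep q) = (b : Rack.EnvelGroup Q); rw [← hrep]; exact hab)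
    show GA.mk (⟨QGAProof.θ (rep q), memA' q⟩ : A') (u q) = GA.mk b v
    rw [hb']
    apply QGAProof.mk_eq_of_conj
    have hbval : (b : Rack.EnvelGroup Q) = QGAProof.θ a := hab.symm
    rw [hbval, hrep, ← hu q, ← hrep, ← hq2]
  · -- act
    intro x y
    have horb' : sameOrbit Q (rep y) (x ◃ y) :=
      (horb y).trans _ _ _ (Relation.EqvGen.rel y (x ◃ y) ⟨x, Or.inl rfl⟩)
    have hrep : rep y = rep (x ◃ y) := huniq (x ◃ y) (rep y) ⟨hmem y, horb'⟩
    have hb' : (⟨QGAProof.θ (rep (x ◃ y)), memA' (x ◃ y)⟩ : A') =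
        (⟨QGAProof.θ (rep y), memA' y⟩ : A') :=
      Subtype.ext (by show QGAProof.θ (rep (x ◃ y)) = QGAProof.θ (rep y); rw [hrep])
    show GA.mk (⟨QGAProof.θ (rep (x ◃ y)), memA' (x ◃ y)⟩ : A') (u (x ◃ y)) = _
    rw [hb', GA.act_mk]
    apply QGAProof.mk_eq_of_conj
    show (u (x ◃ y))⁻¹ * QGAProof.θ (rep y) * u (x ◃ y) = _
    have h1 : (u (x ◃ y))⁻¹ * QGAProof.θ (rep y) * u (x ◃ y) = QGAProof.θ (x ◃ y) := by
      rw [hrep, ← hu (x ◃ y)]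
    rw [h1, QGAProof.theta_act]
    calc QGAProof.θ x * QGAProof.θ y * (QGAProof.θ x)⁻¹
        = ((u x)⁻¹ * QGAProof.θ (rep x) * u x) * ((u y)⁻¹ * QGAProof.θ (rep y) * u y) *
          ((u x)⁻¹ * QGAProof.θ (rep x) * u x)⁻¹ := by rw [← hu x, ← hu y]
      _ = (u y * (u x)⁻¹ * (QGAProof.θ (rep x))⁻¹ * u x)⁻¹ * QGAProof.θ (rep y) *
          (u y * (u x)⁻¹ * (QGAProof.θ (rep x))⁻¹ * u x) := by group
  · -- invAct
    intro x y
    have horb' : sameOrbit Q (rep y) (x ◃⁻¹ y) :=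
      (horb y).trans _ _ _ (Relation.EqvGen.rel y (x ◃⁻¹ y) ⟨x, Or.inr rfl⟩)
    have hrep : rep y = rep (x ◃⁻¹ y) := huniq (x ◃⁻¹ y) (rep y) ⟨hmem y, horb'⟩
    have hb' : (⟨QGAProof.θ (rep (x ◃⁻¹ y)), memA' (x ◃⁻¹ y)⟩ : A') =
        (⟨QGAProof.θ (rep y), memA' y⟩ : A') :=
      Subtype.ext (by show QGAProof.θ (rep (x ◃⁻¹ y)) = QGAProof.θ (rep y); rw [hrep])
    show GA.mk (⟨QGAProof.θ (rep (x ◃⁻¹ y)), memA' (x ◃⁻¹ y)⟩ : A') (u (x ◃⁻¹ y)) = _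
    rw [hb', GA.invAct_mk]
    apply QGAProof.mk_eq_of_conj
    show (u (x ◃⁻¹ y))⁻¹ * QGAProof.θ (rep y) * u (x ◃⁻¹ y) = _
    have h1 : (u (x ◃⁻¹ y))⁻¹ * QGAProof.θ (rep y) * u (x ◃⁻¹ y) = QGAProof.θ (x ◃⁻¹ y) := by
      rw [hrep, ← hu (x ◃⁻¹ y)]
    rw [h1, QGAProof.theta_invAct]
    calc (QGAProof.θ x)⁻¹ * QGAProof.θ y * QGAProof.θ x
        = ((u x)⁻¹ * QGAProof.θ (rep x) * u x)⁻¹ * ((u y)⁻¹ * QGAProof.θ (rep y) * u y) *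
          ((u x)⁻¹ * QGAProof.θ (rep x) * u x) := by rw [← hu x, ← hu y]
      _ = (u y * (u x)⁻¹ * QGAProof.θ (rep x) * u x)⁻¹ * QGAProof.θ (rep y) *
          (u y * (u x)⁻¹ * QGAProof.θ (rep x) * u x) := by group
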